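/- arXiv:1511.03998 — 3 statements merged into one kernel-verified Lean document; each statement's English description precedes it below -/
import Mathlib

section
/- For the N-qubit generalized W state |W⟩ = Σ_{i=1}^N a_i |0⟩^⊗(i−1)|1⟩|0⟩^⊗(N−i) with Σ|a_i|² = 1 and N ≥ 3, the generalized geometric measure equals min_i |a_i|². -/
open scoped BigOperators

noncomputable section

namespace QI

/-- A pure state of a collection of qubits indexed by `ι`, given by its
amplitudes in the computational basis. -/
abbrev PureState (ι : Type) := (ι → Fin 2) → ℂ

variable {ι : Type} [Fintype ι] [DecidableEq ι]

/-- Squared norm of a pure state. -/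
def nsq (ψ : PureState ι) : ℝ := ∑ x, Complex.normSq (ψ x)

/-- Normalization of a pure state. -/
def normalize (ψ : PureState ι) : PureState ι :=
  fun x => ψ x / (Real.sqrt (nsq ψ) : ℂ)

/-- Combine configurations of the qubits in `A` and outside `A`. -/
def merge (A : Finset ι) (a : {i // i ∈ A} → Fin 2) (b : {i // i ∉ A} → Fin 2) :
    ι → Fin 2 := fun i => if h : i ∈ A then a ⟨i, h⟩ else b ⟨i, h⟩

/-- Reduced density matrix of the qubits in `A`. -/
def rdm (ψ : PureState ι) (A : Finset ι) :
    ({i // i ∈ A} → Fin 2) → ({i // i ∈ A} → Fin 2) → ℂ :=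
  fun a a' => ∑ b : {i // i ∉ A} → Fin 2, ψ (merge A a b) * star (ψ (merge A a' b))

/-- Maximal eigenvalue of a (Hermitian) matrix, via the Rayleigh quotient. -/
def maxEig {κ : Type} [Fintype κ] (ρ : κ → κ → ℂ) : ℝ :=
  ⨆ v : {v : κ → ℂ // ∑ i, Complex.normSq (v i) = 1},
    (∑ i, ∑ j, star (v.1 i) * ρ i j * v.1 j).re

/-- The generalized geometric measure: one minus the maximal squared Schmidt
coefficient over all nonempty proper bipartitions. -/
def GGM (ψ : PureState ι) : ℝ :=
  1 - ⨆ A : {A : Finset ι // A.Nonempty ∧ A ≠ Finset.univ}, maxEig (rdm ψ A.1)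

/-- Unnormalized post-measurement state on the remaining qubits after obtaining
the outcome corresponding to the basis vector `ξ` in a rank-1 projective
measurement on qubit `r`. -/
def collapse (ψ : PureState ι) (r : ι) (ξ : Fin 2 → ℂ) :
    PureState {i // i ≠ r} :=
  fun b => ∑ v : Fin 2, ξ v * ψ (fun i => if h : i = r then v else b ⟨i, h⟩)

/-- First measurement-basis vector `cos(θ/2)|0⟩ + e^{iφ} sin(θ/2)|1⟩`. -/
def xiUp (θ φ : ℝ) : Fin 2 → ℂ :=
  ![(Real.cos (θ/2) : ℂ), Complex.exp (φ * Complex.I) * (Real.sin (θ/2) : ℂ)]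

/-- Second measurement-basis vector `-e^{-iφ} sin(θ/2)|0⟩ + cos(θ/2)|1⟩`. -/
def xiDn (θ φ : ℝ) : Fin 2 → ℂ :=
  ![-(Complex.exp (-(φ * Complex.I))) * (Real.sin (θ/2) : ℂ), (Real.cos (θ/2) : ℂ)]

/-- Average post-measurement GGM for the projective measurement `(θ, φ)` on
qubit `r`. -/
def avgGGM (ψ : PureState ι) (r : ι) (θ φ : ℝ) : ℝ :=
  nsq (collapse ψ r (xiUp θ φ)) * GGM (normalize (collapse ψ r (xiUp θ φ))) +
  nsq (collapse ψ r (xiDn θ φ)) * GGM (normalize (collapse ψ r (xiDn θ φ)))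

/-- The localizable generalized geometric measure for single-qubit projective
measurement on qubit `r`. -/
def LGGM (ψ : PureState ι) (r : ι) : ℝ :=
  sSup {E | ∃ θ ∈ Set.Icc 0 Real.pi, ∃ φ ∈ Set.Ico 0 (2 * Real.pi),
    E = avgGGM ψ r θ φ}

/-- The generalized GHZ state `a₁|0…0⟩ + a₂|1…1⟩`. -/
def ghz (a1 a2 : ℂ) : PureState ι :=
  fun x => if x = fun _ => 0 then a1 else if x = fun _ => 1 then a2 else 0

/-- Computational basis vector with a single `1` at position `i`. -/
def basisVec (i : ι) : ι → Fin 2 := fun j => if j = i then 1 else 0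

/-- The generalized W state `Σᵢ aᵢ |0…1ᵢ…0⟩`. -/
def wState (a : ι → ℂ) : PureState ι :=
  fun x => ∑ i, if x = basisVec i then a i else 0

/-- The Dicke state with `k` excitations: equal superposition of all
computational basis states with exactly `k` ones. -/
def dicke (k : ℕ) : PureState ι :=
  fun x => if (∑ i, ((x i : ℕ))) = k
    then ((1 / Real.sqrt ((Fintype.card ι).choose k) : ℝ) : ℂ) else 0

/-!
Cutting the qubits into `A` and its complement, the W state reads `|W_A⟩|0⟩ + |0⟩|W_Aᶜ⟩`, so
the quadratic form of the reduced density matrix is `|⟨v|W_A⟩|² + |v(0)|² ‖W_Aᶜ‖²`. As `|0⟩` is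
orthogonal to every single-excitation state, Cauchy–Schwarz bounds this by
`max (‖W_A‖², ‖W_Aᶜ‖²)` on unit vectors, which is at most `1 - minᵢ |aᵢ|²` once both sides of the
cut are nonempty. The vector `|0⟩` on the single qubit `i₀` of smallest weight attains
`1 - |a_{i₀}|²`.
-/

open Finset

lemma normSq_sum_mul_le {κ : Type} [Fintype κ] (f g : κ → ℂ) :
    Complex.normSq (∑ i, f i * g i) ≤
      (∑ i, Complex.normSq (f i)) * ∑ i, Complex.normSq (g i) := by
  simp only [← Complex.sq_norm]
  calc ‖∑ i, f i * g i‖ ^ 2 ≤ (∑ i, ‖f i‖ * ‖g i‖) ^ 2 := by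
        gcongr
        exact (norm_sum_le _ _).trans_eq (by simp only [norm_mul])
    _ ≤ (∑ i, ‖f i‖ ^ 2) * ∑ i, ‖g i‖ ^ 2 := sum_mul_sq_le_sq_mul_sq _ _ _

lemma sum_subtype_mem_add_sum_subtype_not_mem {M : Type} [AddCommMonoid M] (A : Finset ι)
    (f : ι → M) : ∑ i : {i // i ∈ A}, f i + ∑ i : {i // i ∉ A}, f i = ∑ i, f i := by
  rw [← sum_add_sum_compl A, ← sum_coe_sort A, sum_subtype (F := inferInstance) Aᶜ
    fun _ => mem_compl]

section maxEig

variable {κ : Type} [Fintype κ]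

lemma maxEig_le [Nonempty κ] (ρ : κ → κ → ℂ) {r : ℝ}
    (h : ∀ v : κ → ℂ, ∑ i, Complex.normSq (v i) = 1 → (∑ i, ∑ j, star (v i) * ρ i j * v j).re ≤ r) :
    maxEig ρ ≤ r := by
  classical
  have : Nonempty {v : κ → ℂ // ∑ i, Complex.normSq (v i) = 1} :=
    ⟨⟨Pi.single (Classical.arbitrary κ) 1, by simp [Pi.single_apply]⟩⟩
  exact ciSup_le fun v => h v.1 v.2

lemma le_maxEig (ρ : κ → κ → ℂ) {r : ℝ}
    (h : ∀ v : κ → ℂ, ∑ i, Complex.normSq (v i) = 1 → (∑ i, ∑ j, star (v i) * ρ i j * v j).re ≤ r)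
    (v : κ → ℂ) (hv : ∑ i, Complex.normSq (v i) = 1) :
    (∑ i, ∑ j, star (v i) * ρ i j * v j).re ≤ maxEig ρ :=
  le_ciSup (f := fun v : {v : κ → ℂ // ∑ i, Complex.normSq (v i) = 1} =>
      (∑ i, ∑ j, star (v.1 i) * ρ i j * v.1 j).re)
    ⟨r, Set.forall_mem_range.2 fun v => h v.1 v.2⟩ ⟨v, hv⟩

end maxEig

lemma re_sum_star_mul_rdm_mul (ψ : PureState ι) (A : Finset ι)
    (v : ({i // i ∈ A} → Fin 2) → ℂ) :
    (∑ c, ∑ c', star (v c) * rdm ψ A c c' * v c').re =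
      ∑ b, Complex.normSq (∑ c, star (v c) * ψ (merge A c b)) := by
  have hsum : ∑ c, ∑ c', star (v c) * rdm ψ A c c' * v c' =
      ∑ b, star (∑ c, star (v c) * ψ (merge A c b)) * ∑ c, star (v c) * ψ (merge A c b) := by
    simp only [rdm, star_sum, mul_sum, sum_mul, star_mul', star_star]
    conv_rhs => rw [sum_comm]
    refine sum_congr rfl fun c _ => ?_
    rw [sum_comm]
    refine sum_congr rfl fun b _ => sum_congr rfl fun c' _ => ?_
    ring
  rw [hsum, Complex.re_sum]
  refine sum_congr rfl fun b _ => ?_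
  rw [Complex.star_def, ← Complex.normSq_eq_conj_mul_self, Complex.ofReal_re]

omit [Fintype ι] in
lemma basisVec_injective : Function.Injective (basisVec (ι := ι)) := by
  intro i j h
  simpa [basisVec] using congrFun h i

omit [Fintype ι] in
lemma basisVec_ne_zero (i : ι) : basisVec i ≠ 0 := by
  intro h
  simpa [basisVec] using congrFun h i

lemma wState_basisVec (a : ι → ℂ) (i : ι) : wState a (basisVec i) = a i := by
  simp [wState, basisVec_injective.eq_iff]

lemma wState_zero (a : ι → ℂ) : wState a 0 = 0 := by
  simp [wState, (basisVec_ne_zero _).symm]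

lemma sum_mul_wState (a : ι → ℂ) (f : (ι → Fin 2) → ℂ) :
    ∑ x, f x * wState a x = ∑ i, f (basisVec i) * a i := by
  simp only [wState, mul_sum, mul_ite, mul_zero]
  rw [sum_comm]
  simp

lemma sum_normSq_wState (a : ι → ℂ) :
    ∑ x, Complex.normSq (wState a x) = ∑ i, Complex.normSq (a i) := by
  have hconj := sum_mul_wState a (fun x => star (wState a x))
  simp only [wState_basisVec, Complex.star_def, ← Complex.normSq_eq_conj_mul_self] at hconj
  exact_mod_cast hconj

lemma sum_normSq_basisVec_add_le (v : (ι → Fin 2) → ℂ) :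
    ∑ i, Complex.normSq (v (basisVec i)) + Complex.normSq (v 0) ≤ ∑ x, Complex.normSq (v x) := by
  have hzero : (0 : ι → Fin 2) ∉ univ.map ⟨basisVec, basisVec_injective⟩ := by
    simpa using fun i => basisVec_ne_zero i
  calc ∑ i, Complex.normSq (v (basisVec i)) + Complex.normSq (v 0)
      = ∑ x ∈ cons 0 (univ.map ⟨basisVec, basisVec_injective⟩) hzero, Complex.normSq (v x) := by
        rw [sum_cons, sum_map, add_comm]; rfl
    _ ≤ ∑ x, Complex.normSq (v x) :=
        sum_le_univ_sum_of_nonneg fun _ => Complex.normSq_nonneg _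

omit [Fintype ι] in
lemma merge_eq_iff (A : Finset ι) (c : {i // i ∈ A} → Fin 2) (b : {i // i ∉ A} → Fin 2)
    (x : ι → Fin 2) : merge A c b = x ↔ c = (fun i => x i.1) ∧ b = (fun i => x i.1) := by
  simp only [funext_iff, Subtype.forall, merge]
  constructor
  · intro h
    exact ⟨fun i hi => by simpa [hi] using h i, fun i hi => by simpa [hi] using h i⟩
  · rintro ⟨hc, hb⟩ i
    by_cases hi : i ∈ A
    · simp [hi, hc]
    · simp [hi, hb]

omit [Fintype ι] in
lemma restrict_basisVec_of_mem {p : ι → Prop} {i : ι} (hi : p i) :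
    (fun j : {j // p j} => basisVec i j) = basisVec ⟨i, hi⟩ := by
  ext j
  simp [basisVec, Subtype.ext_iff]

omit [Fintype ι] in
lemma restrict_basisVec_of_not_mem {p : ι → Prop} {i : ι} (hi : ¬ p i) :
    (fun j : {j // p j} => basisVec i j) = 0 := by
  ext ⟨j, hj⟩
  simp [basisVec, show j ≠ i from fun h => hi (h ▸ hj)]

omit [Fintype ι] in
lemma merge_eq_basisVec_of_mem {A : Finset ι} {i : ι} (hi : i ∈ A) (c : {i // i ∈ A} → Fin 2)
    (b : {i // i ∉ A} → Fin 2) : merge A c b = basisVec i ↔ c = basisVec ⟨i, hi⟩ ∧ b = 0 := by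
  rw [merge_eq_iff, restrict_basisVec_of_mem hi,
    restrict_basisVec_of_not_mem (p := (· ∉ A)) (not_not.2 hi)]

omit [Fintype ι] in
lemma merge_eq_basisVec_of_not_mem {A : Finset ι} {i : ι} (hi : i ∉ A)
    (c : {i // i ∈ A} → Fin 2) (b : {i // i ∉ A} → Fin 2) :
    merge A c b = basisVec i ↔ c = 0 ∧ b = basisVec ⟨i, hi⟩ := by
  rw [merge_eq_iff, restrict_basisVec_of_mem (p := (· ∉ A)) hi, restrict_basisVec_of_not_mem hi]

lemma wState_merge (a : ι → ℂ) (A : Finset ι) (c : {i // i ∈ A} → Fin 2)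
    (b : {i // i ∉ A} → Fin 2) :
    wState a (merge A c b) =
      (if b = 0 then wState (fun i : {i // i ∈ A} => a i) c else 0) +
        (if c = 0 then wState (fun i : {i // i ∉ A} => a i) b else 0) := by
  rw [wState, ← sum_subtype_mem_add_sum_subtype_not_mem A]
  congr 1
  · simp only [merge_eq_basisVec_of_mem (Subtype.prop _)]
    split_ifs with hb
    · simp [wState, hb]
    · simp [hb]
  · simp only [fun i : {i // i ∉ A} => merge_eq_basisVec_of_not_mem i.2 c b]
    split_ifs with hc
    · simp [wState, hc]
    · simp [hc]

lemma sum_star_mul_wState_merge (a : ι → ℂ) (A : Finset ι) (v : ({i // i ∈ A} → Fin 2) → ℂ)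
    (b : {i // i ∉ A} → Fin 2) :
    ∑ c, star (v c) * wState a (merge A c b) =
      (if b = 0 then ∑ i : {i // i ∈ A}, star (v (basisVec i)) * a i else 0) +
        star (v 0) * wState (fun i : {i // i ∉ A} => a i) b := by
  simp only [wState_merge, mul_add, sum_add_distrib, mul_ite, mul_zero]
  congr 1
  · split_ifs <;> simp [sum_mul_wState]
  · simp

lemma re_sum_star_mul_rdm_wState_mul (a : ι → ℂ) (A : Finset ι)
    (v : ({i // i ∈ A} → Fin 2) → ℂ) :
    (∑ c, ∑ c', star (v c) * rdm (wState a) A c c' * v c').re =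
      Complex.normSq (∑ i : {i // i ∈ A}, star (v (basisVec i)) * a i) +
        Complex.normSq (v 0) * ∑ i : {i // i ∉ A}, Complex.normSq (a i) := by
  have hnormSq (b : {i // i ∉ A} → Fin 2) :
      Complex.normSq (∑ c, star (v c) * wState a (merge A c b)) =
        (if b = 0 then Complex.normSq (∑ i : {i // i ∈ A}, star (v (basisVec i)) * a i) else 0) +
          Complex.normSq (v 0) * Complex.normSq (wState (fun i : {i // i ∉ A} => a i) b) := by
    rw [sum_star_mul_wState_merge]
    split_ifs with hb
    · simp [hb, wState_zero]
    · simp [Complex.normSq_mul]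
  rw [re_sum_star_mul_rdm_mul]
  simp only [hnormSq, sum_add_distrib, ← mul_sum, sum_normSq_wState, sum_ite_eq', mem_univ,
    if_true]

lemma re_sum_star_mul_rdm_wState_mul_le (a : ι → ℂ) (A : Finset ι) {r : ℝ}
    (hA : ∑ i : {i // i ∈ A}, Complex.normSq (a i) ≤ r)
    (hAc : ∑ i : {i // i ∉ A}, Complex.normSq (a i) ≤ r)
    (v : ({i // i ∈ A} → Fin 2) → ℂ) (hv : ∑ x, Complex.normSq (v x) = 1) :
    (∑ c, ∑ c', star (v c) * rdm (wState a) A c c' * v c').re ≤ r := by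
  have hr : 0 ≤ r := (sum_nonneg fun _ _ => Complex.normSq_nonneg _).trans hA
  have hbessel := sum_normSq_basisVec_add_le v
  rw [hv] at hbessel
  have hcs := normSq_sum_mul_le (fun i : {i // i ∈ A} => star (v (basisVec i))) fun i => a i
  simp only [Complex.star_def, Complex.normSq_conj] at hcs
  rw [re_sum_star_mul_rdm_wState_mul]
  calc _ ≤ (∑ i : {i // i ∈ A}, Complex.normSq (v (basisVec i))) * r +
        Complex.normSq (v 0) * r := by
        refine add_le_add (hcs.trans ?_) ?_
        · exact mul_le_mul_of_nonneg_left hA (sum_nonneg fun _ _ => Complex.normSq_nonneg _)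
        · exact mul_le_mul_of_nonneg_left hAc (Complex.normSq_nonneg _)
    _ = (∑ i : {i // i ∈ A}, Complex.normSq (v (basisVec i)) + Complex.normSq (v 0)) * r := by
        ring
    _ ≤ r := mul_le_of_le_one_left hr hbessel

lemma maxEig_rdm_wState_le (a : ι → ℂ) (A : Finset ι) {r : ℝ}
    (hA : ∑ i : {i // i ∈ A}, Complex.normSq (a i) ≤ r)
    (hAc : ∑ i : {i // i ∉ A}, Complex.normSq (a i) ≤ r) :
    maxEig (rdm (wState a) A) ≤ r :=
  maxEig_le _ (re_sum_star_mul_rdm_wState_mul_le a A hA hAc)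

lemma sum_compl_le_maxEig_rdm_wState (a : ι → ℂ) (A : Finset ι) :
    ∑ i : {i // i ∉ A}, Complex.normSq (a i) ≤ maxEig (rdm (wState a) A) := by
  classical
  have hbound := le_maxEig _ (re_sum_star_mul_rdm_wState_mul_le a A le_sup_left le_sup_right)
    (Pi.single 0 1) (by simp [Pi.single_apply])
  rw [re_sum_star_mul_rdm_wState_mul] at hbound
  simpa [Pi.single_apply, basisVec_ne_zero] using hbound

lemma maxEig_rdm_wState_le_one_sub (a : ι → ℂ) (h : ∑ i, Complex.normSq (a i) = 1) {m : ℝ}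
    (hm : ∀ i, m ≤ Complex.normSq (a i)) {A : Finset ι} (hA : A.Nonempty) (hA' : A ≠ univ) :
    maxEig (rdm (wState a) A) ≤ 1 - m := by
  have hsplit := sum_subtype_mem_add_sum_subtype_not_mem A fun i => Complex.normSq (a i)
  obtain ⟨i, hi⟩ := hA
  obtain ⟨k, hk⟩ : ∃ k, k ∉ A := by simpa [eq_univ_iff_forall] using hA'
  have hmA := (hm i).trans (single_le_sum (f := fun j : {j // j ∈ A} => Complex.normSq (a j))
    (fun _ _ => Complex.normSq_nonneg _) (mem_univ ⟨i, hi⟩))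
  have hmAc := (hm k).trans (single_le_sum (f := fun j : {j // j ∉ A} => Complex.normSq (a j))
    (fun _ _ => Complex.normSq_nonneg _) (mem_univ ⟨k, hk⟩))
  exact maxEig_rdm_wState_le a A (by linarith) (by linarith)

/-- For the `N`-qubit generalized W state (`N ≥ 3`) with `Σᵢ |aᵢ|² = 1`,
the generalized geometric measure equals `minᵢ |aᵢ|²`. -/
theorem stmt3 (N : ℕ) (hN : 3 ≤ N) (a : Fin N → ℂ)
    (h : ∑ i, Complex.normSq (a i) = 1) :
    GGM (wState a) = ⨅ i, Complex.normSq (a i) := by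
  have : Nontrivial (Fin N) := Fin.nontrivial_iff_two_le.2 (by omega)
  obtain ⟨i₀, hi₀⟩ := Finite.exists_min fun i => Complex.normSq (a i)
  have hinf : ⨅ i, Complex.normSq (a i) = Complex.normSq (a i₀) :=
    le_antisymm (ciInf_le (Set.finite_range _).bddBelow i₀) (le_ciInf hi₀)
  have hA₀ : 1 - Complex.normSq (a i₀) ≤ maxEig (rdm (wState a) {i₀}) := by
    have hsplit := sum_subtype_mem_add_sum_subtype_not_mem {i₀} fun i => Complex.normSq (a i)
    rw [h, sum_coe_sort {i₀} fun i => Complex.normSq (a i), sum_singleton] at hsplit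
    linarith [sum_compl_le_maxEig_rdm_wState a {i₀}]
  have hproper : ({i₀} : Finset (Fin N)).Nonempty ∧ {i₀} ≠ univ :=
    ⟨singleton_nonempty _, singleton_ne_univ _⟩
  have : Nonempty {A : Finset (Fin N) // A.Nonempty ∧ A ≠ univ} := ⟨⟨_, hproper⟩⟩
  have hsup : ⨆ A : {A : Finset (Fin N) // A.Nonempty ∧ A ≠ univ}, maxEig (rdm (wState a) A.1) =
      1 - Complex.normSq (a i₀) :=
    le_antisymm (ciSup_le fun A => maxEig_rdm_wState_le_one_sub a h hi₀ A.2.1 A.2.2)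
      (le_ciSup_of_le (Finite.bddAbove_range _) ⟨_, hproper⟩ hA₀)
  rw [GGM, hsup, hinf, sub_sub_cancel]

end QI
end
end

section
/- Let a₁ ∈ ℂ with |a₁|² ≥ 1/2 and a₂ = complex number with |a₁|² + |a₂|² = 1. After a rank-1 projective measurement in basis {cos(θ/2)|0⟩ + e^{iφ}sin(θ/2)|1⟩, −e^{−iφ}sin(θ/2)|0⟩ + cos(θ/2)|1⟩} on the first qubit of the N-qubit generalized GHZ state, the average GGM of the post-measurement (N−1)-qubit states satisfies Σ_l p^l G(|ψ^l⟩) = 1 − max{|a₁|², cos²(θ/2), sin²(θ/2)}, where p¹ = |a₁|²cos²(θ/2) + |a₂|²sin²(θ/2), p² = |a₁|²sin²(θ/2) + |a₂|²cos²(θ/2), and each |ψ^l⟩ is an (N−1)-qubit generalized GHZ state. -/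
open scoped BigOperators

noncomputable section

/-!
Measuring the first qubit of `a₁|0…0⟩ + a₂|1…1⟩` along `ξ` leaves `ξ₀a₁|0…0⟩ + ξ₁a₂|1…1⟩`,
again a generalized GHZ state. For every nonempty proper bipartition the reduced state of
`c₁|0…0⟩ + c₂|1…1⟩` is diagonal with entries `|c₁|², |c₂|²` (and zeros), so after normalization
its GGM is `1 - max(|c₁|², |c₂|²) / (|c₁|² + |c₂|²)`, and the outcome probability times this GGM
is `min(|c₁|², |c₂|²)`. The identity
`min(|a₁|² c², |a₂|² s²) + min(|a₁|² s², |a₂|² c²) = 1 - max(|a₁|², c², s²)`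
for `c² + s² = 1` and `|a₁|² ≥ 1/2` is then a case analysis.
-/

namespace QI

lemma re_sum_star_mul_diagonal_mul {κ : Type} [Fintype κ] [DecidableEq κ] (d : κ → ℝ)
    (v : κ → ℂ) :
    (∑ i, ∑ j, star (v i) * Matrix.diagonal (fun i => (d i : ℂ)) i j * v j).re
      = ∑ i, d i * Complex.normSq (v i) := by
  simp only [Matrix.diagonal_apply, mul_ite, ite_mul, mul_zero, zero_mul, Finset.sum_ite_eq,
    Finset.mem_univ, if_true, Complex.re_sum]
  refine Finset.sum_congr rfl fun i _ => ?_
  rw [mul_right_comm, RCLike.star_def, ← Complex.normSq_eq_conj_mul_self, ← Complex.ofReal_mul,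
    Complex.ofReal_re, mul_comm]

lemma maxEig_diagonal {κ : Type} [Fintype κ] [DecidableEq κ] [Nonempty κ] (d : κ → ℝ) :
    maxEig (Matrix.diagonal fun i => (d i : ℂ)) = Finset.univ.sup' Finset.univ_nonempty d := by
  have hunit : ∀ j, ∑ i, Complex.normSq ((Pi.single j 1 : κ → ℂ) i) = 1 := by
    intro j
    simp [Pi.single_apply, apply_ite Complex.normSq]
  have hbound : ∀ v : {v : κ → ℂ // ∑ i, Complex.normSq (v i) = 1},
      (∑ i, ∑ j, star (v.1 i) * Matrix.diagonal (fun i => (d i : ℂ)) i j * v.1 j).re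
        ≤ Finset.univ.sup' Finset.univ_nonempty d := by
    rintro ⟨v, hv⟩
    rw [re_sum_star_mul_diagonal_mul]
    calc ∑ i, d i * Complex.normSq (v i)
        ≤ ∑ i, Finset.univ.sup' Finset.univ_nonempty d * Complex.normSq (v i) :=
          Finset.sum_le_sum fun i _ => mul_le_mul_of_nonneg_right
            (Finset.le_sup' d (Finset.mem_univ i)) (Complex.normSq_nonneg _)
      _ = Finset.univ.sup' Finset.univ_nonempty d := by rw [← Finset.mul_sum, hv, mul_one]
  have : Nonempty {v : κ → ℂ // ∑ i, Complex.normSq (v i) = 1} :=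
    ⟨⟨_, hunit (Classical.arbitrary κ)⟩⟩
  refine le_antisymm (ciSup_le hbound) (Finset.sup'_le _ _ fun j _ => ?_)
  refine le_trans (le_of_eq ?_) (le_ciSup ⟨_, Set.forall_mem_range.2 hbound⟩ ⟨_, hunit j⟩)
  rw [re_sum_star_mul_diagonal_mul]
  simp [Pi.single_apply]

lemma const_zero_ne_const_one {α : Type} [Nonempty α] :
    (fun _ : α => (0 : Fin 2)) ≠ fun _ => 1 :=
  fun h => absurd (congrFun h (Classical.arbitrary α)) (by decide)

variable {ι : Type}

section

variable [Fintype ι]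

lemma ghz_apply_zero (c1 c2 : ℂ) : ghz c1 c2 (fun _ : ι => 0) = c1 := by
  simp [ghz]

lemma ghz_apply_one [Nonempty ι] (c1 c2 : ℂ) : ghz c1 c2 (fun _ : ι => 1) = c2 := by
  simp [ghz, const_zero_ne_const_one.symm]

lemma ghz_apply_of_ne (c1 c2 : ℂ) {x : ι → Fin 2} (h0 : x ≠ fun _ => 0)
    (h1 : x ≠ fun _ => 1) : ghz c1 c2 x = 0 := by
  simp [ghz, h0, h1]

end

variable [DecidableEq ι]

lemma merge_eq_const_iff (A : Finset ι) (a : {i // i ∈ A} → Fin 2)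
    (b : {i // i ∉ A} → Fin 2) (c : Fin 2) :
    merge A a b = (fun _ => c) ↔ (a = fun _ => c) ∧ (b = fun _ => c) := by
  simp only [funext_iff, merge, Subtype.forall]
  constructor
  · intro h
    exact ⟨fun i hi => by simpa [hi] using h i, fun i hi => by simpa [hi] using h i⟩
  · rintro ⟨ha, hb⟩ i
    by_cases hi : i ∈ A <;> simp [hi, ha, hb]

lemma dite_eq_const_iff (r : ι) (v : Fin 2) (b : {i // i ≠ r} → Fin 2) (c : Fin 2) :
    (fun i => if h : i = r then v else b ⟨i, h⟩) = (fun _ => c) ↔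
      v = c ∧ b = fun _ => c := by
  simp only [funext_iff, Subtype.forall]
  constructor
  · intro h
    exact ⟨by simpa using h r, fun i hi => by simpa [hi] using h i⟩
  · rintro ⟨rfl, hb⟩ i
    by_cases hi : i = r <;> simp [hi, hb]

variable [Fintype ι]

lemma sum_ghz [Nonempty ι] {M : Type} [AddCommMonoid M] (f : ℂ → M) (hf : f 0 = 0)
    (c1 c2 : ℂ) : ∑ x : ι → Fin 2, f (ghz c1 c2 x) = f c1 + f c2 := by
  rw [Finset.sum_eq_add (fun _ => 0) (fun _ => 1) const_zero_ne_const_one, ghz_apply_zero,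
    ghz_apply_one]
  · intro x _ hx
    rw [ghz_apply_of_ne c1 c2 hx.1 hx.2, hf]
  all_goals simp

lemma nsq_ghz [Nonempty ι] (c1 c2 : ℂ) :
    nsq (ghz c1 c2 : PureState ι) = Complex.normSq c1 + Complex.normSq c2 :=
  sum_ghz _ Complex.normSq_zero c1 c2

lemma sup'_normSq_ghz [Nonempty ι] (c1 c2 : ℂ) :
    Finset.univ.sup' Finset.univ_nonempty (fun x : ι → Fin 2 => Complex.normSq (ghz c1 c2 x))
      = max (Complex.normSq c1) (Complex.normSq c2) := by
  refine le_antisymm (Finset.sup'_le _ _ fun x _ => ?_) (max_le ?_ ?_)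
  · by_cases h0 : x = fun _ => 0
    · simp [h0, ghz_apply_zero]
    by_cases h1 : x = fun _ => 1
    · simp [h1, ghz_apply_one]
    simpa [ghz_apply_of_ne c1 c2 h0 h1] using le_max_of_le_left (Complex.normSq_nonneg c1)
  · exact Finset.le_sup'_of_le _ (Finset.mem_univ fun _ => 0) (by rw [ghz_apply_zero])
  · exact Finset.le_sup'_of_le _ (Finset.mem_univ fun _ => 1) (by rw [ghz_apply_one])

lemma normalize_ghz (c1 c2 : ℂ) :
    normalize (ghz c1 c2 : PureState ι)
      = ghz (c1 / (Real.sqrt (nsq (ghz c1 c2 : PureState ι)) : ℂ))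
          (c2 / (Real.sqrt (nsq (ghz c1 c2 : PureState ι)) : ℂ)) := by
  funext x
  unfold normalize ghz
  split_ifs <;> simp

lemma ghz_merge (A : Finset ι) (c1 c2 : ℂ) (a : {i // i ∈ A} → Fin 2)
    (b : {i // i ∉ A} → Fin 2) :
    ghz c1 c2 (merge A a b)
      = if (a = fun _ => 0) ∧ (b = fun _ => 0) then c1
        else if (a = fun _ => 1) ∧ (b = fun _ => 1) then c2 else 0 := by
  simp only [ghz, merge_eq_const_iff]

lemma rdm_ghz (c1 c2 : ℂ) {A : Finset ι} (hA : A.Nonempty) (hA' : A ≠ Finset.univ) :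
    rdm (ghz c1 c2) A = Matrix.diagonal fun a => (Complex.normSq (ghz c1 c2 a) : ℂ) := by
  have : Nonempty {i // i ∈ A} := hA.to_subtype
  have : Nonempty {i // i ∉ A} := by
    obtain ⟨i, hi⟩ := (Finset.compl_ne_univ_iff_nonempty Aᶜ).1 (by simpa using hA')
    exact ⟨⟨i, Finset.mem_compl.1 hi⟩⟩
  have e1 := const_zero_ne_const_one (α := {i // i ∈ A})
  have e2 := const_zero_ne_const_one (α := {i // i ∉ A})
  ext a a'
  rw [rdm, Matrix.diagonal_apply]
  split_ifs with haa
  · subst haa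
    simp only [RCLike.star_def, Complex.mul_conj, ← Complex.ofReal_sum]
    congr 1
    by_cases h0 : a = fun _ => 0
    · simp [ghz_merge, h0, e1, ghz_apply_zero, apply_ite Complex.normSq]
    by_cases h1 : a = fun _ => 1
    · simp [ghz_merge, h1, e1.symm, ghz_apply_one, apply_ite Complex.normSq]
    simp [ghz_merge, h0, h1, ghz_apply_of_ne c1 c2 h0 h1]
  · -- a nonzero term forces `a`, `a'` and `b` to be one and the same constant configuration
    refine Finset.sum_eq_zero fun b _ => ?_
    rw [ghz_merge, ghz_merge]
    split_ifs <;> simp_all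

lemma GGM_ghz (c1 c2 : ℂ) (hcard : 2 ≤ Fintype.card ι) :
    GGM (ghz c1 c2 : PureState ι) = 1 - max (Complex.normSq c1) (Complex.normSq c2) := by
  obtain ⟨i⟩ : Nonempty ι := Fintype.card_pos_iff.mp (by omega)
  have : Nonempty {A : Finset ι // A.Nonempty ∧ A ≠ Finset.univ} := by
    refine ⟨⟨{i}, Finset.singleton_nonempty i, fun h => ?_⟩⟩
    have := congrArg Finset.card h
    simp only [Finset.card_singleton, Finset.card_univ] at this
    omega
  have hschmidt : ∀ A : {A : Finset ι // A.Nonempty ∧ A ≠ Finset.univ},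
      maxEig (rdm (ghz c1 c2) A.1) = max (Complex.normSq c1) (Complex.normSq c2) := by
    rintro ⟨A, hA, hA'⟩
    have : Nonempty {i // i ∈ A} := hA.to_subtype
    rw [rdm_ghz c1 c2 hA hA', maxEig_diagonal, sup'_normSq_ghz]
  rw [GGM, iSup_congr hschmidt, ciSup_const]

lemma nsq_mul_GGM_normalize_ghz (c1 c2 : ℂ) (hcard : 2 ≤ Fintype.card ι) :
    nsq (ghz c1 c2 : PureState ι) * GGM (normalize (ghz c1 c2 : PureState ι))
      = min (Complex.normSq c1) (Complex.normSq c2) := by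
  have : Nonempty ι := Fintype.card_pos_iff.mp (by omega)
  rw [normalize_ghz, GGM_ghz _ _ hcard, nsq_ghz]
  have h1 := Complex.normSq_nonneg c1
  have h2 := Complex.normSq_nonneg c2
  rcases (add_nonneg h1 h2).eq_or_lt with h0 | h0
  · rw [show Complex.normSq c1 = 0 by linarith, show Complex.normSq c2 = 0 by linarith]
    simp
  · simp only [Complex.normSq_div, Complex.normSq_ofReal, Real.mul_self_sqrt h0.le,
      max_div_div_right h0.le]
    rw [mul_sub, mul_one, mul_div_cancel₀ _ h0.ne']
    linarith [min_add_max (Complex.normSq c1) (Complex.normSq c2)]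

lemma collapse_ghz (r : ι) [Nonempty {i // i ≠ r}] (a1 a2 : ℂ) (ξ : Fin 2 → ℂ) :
    collapse (ghz a1 a2 : PureState ι) r ξ = ghz (ξ 0 * a1) (ξ 1 * a2) := by
  have e := const_zero_ne_const_one (α := {i // i ≠ r})
  funext b
  simp only [collapse, ghz, dite_eq_const_iff, Fin.sum_univ_two]
  by_cases h0 : b = fun _ => 0
  · simp [h0, e]
  by_cases h1 : b = fun _ => 1 <;> simp [h0, h1, e.symm]

lemma collapse_ghz_xiUp (r : ι) [Nonempty {i // i ≠ r}] (a1 a2 : ℂ) (θ φ : ℝ) :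
    collapse (ghz a1 a2 : PureState ι) r (xiUp θ φ)
      = ghz (a1 * (Real.cos (θ / 2) : ℂ))
          (a2 * Complex.exp (φ * Complex.I) * (Real.sin (θ / 2) : ℂ)) := by
  rw [collapse_ghz]
  congr 1 <;> simp [xiUp] <;> ring

lemma collapse_ghz_xiDn (r : ι) [Nonempty {i // i ≠ r}] (a1 a2 : ℂ) (θ φ : ℝ) :
    collapse (ghz a1 a2 : PureState ι) r (xiDn θ φ)
      = ghz (-(a1 * Complex.exp (-(φ * Complex.I))) * (Real.sin (θ / 2) : ℂ))
          (a2 * (Real.cos (θ / 2) : ℂ)) := by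
  rw [collapse_ghz]
  congr 1 <;> simp [xiDn] <;> ring

lemma normSq_exp_ofReal_mul_I (t : ℝ) : Complex.normSq (Complex.exp (t * Complex.I)) = 1 := by
  rw [Complex.normSq_eq_norm_sq, Complex.norm_exp_ofReal_mul_I, one_pow]

lemma nsq_collapse_ghz_xiUp (r : ι) [Nonempty {i // i ≠ r}] (a1 a2 : ℂ) (θ φ : ℝ) :
    nsq (collapse (ghz a1 a2 : PureState ι) r (xiUp θ φ))
      = Complex.normSq a1 * Real.cos (θ / 2) ^ 2 + Complex.normSq a2 * Real.sin (θ / 2) ^ 2 := by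
  rw [collapse_ghz_xiUp, nsq_ghz]
  simp only [Complex.normSq_mul, normSq_exp_ofReal_mul_I, Complex.normSq_ofReal, mul_one, ← sq]

lemma nsq_collapse_ghz_xiDn (r : ι) [Nonempty {i // i ≠ r}] (a1 a2 : ℂ) (θ φ : ℝ) :
    nsq (collapse (ghz a1 a2 : PureState ι) r (xiDn θ φ))
      = Complex.normSq a1 * Real.sin (θ / 2) ^ 2 + Complex.normSq a2 * Real.cos (θ / 2) ^ 2 := by
  rw [collapse_ghz_xiDn, nsq_ghz]
  simp only [Complex.normSq_mul, Complex.normSq_neg, Complex.exp_neg, Complex.normSq_inv,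
    normSq_exp_ofReal_mul_I, Complex.normSq_ofReal, inv_one, mul_one, ← sq]

lemma avgGGM_ghz (r : ι) (hcard : 2 ≤ Fintype.card {i // i ≠ r}) (a1 a2 : ℂ) (θ φ : ℝ) :
    avgGGM (ghz a1 a2 : PureState ι) r θ φ
      = min (Complex.normSq a1 * Real.cos (θ / 2) ^ 2) (Complex.normSq a2 * Real.sin (θ / 2) ^ 2)
        + min (Complex.normSq a1 * Real.sin (θ / 2) ^ 2)
            (Complex.normSq a2 * Real.cos (θ / 2) ^ 2) := by
  have : Nonempty {i // i ≠ r} := Fintype.card_pos_iff.mp (by omega)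
  rw [avgGGM, collapse_ghz_xiUp, collapse_ghz_xiDn, nsq_mul_GGM_normalize_ghz _ _ hcard,
    nsq_mul_GGM_normalize_ghz _ _ hcard]
  simp only [Complex.normSq_mul, Complex.normSq_neg, Complex.exp_neg, Complex.normSq_inv,
    normSq_exp_ofReal_mul_I, Complex.normSq_ofReal, inv_one, mul_one, ← sq]

lemma min_add_min_eq_one_sub_max {A B x y : ℝ} (hAB : A + B = 1) (hxy : x + y = 1)
    (hA : 1 / 2 ≤ A) :
    min (A * x) (B * y) + min (A * y) (B * x) = 1 - max A (max x y) := by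
  obtain rfl : B = 1 - A := by linarith
  obtain rfl : x = 1 - y := by linarith
  rw [min_def, min_def, max_def, max_def]
  split_ifs <;> nlinarith

/-- After a rank-1 projective measurement in the basis
`{cos(θ/2)|0⟩ + e^{iφ} sin(θ/2)|1⟩, -e^{-iφ} sin(θ/2)|0⟩ + cos(θ/2)|1⟩}`
on the first qubit of the `N`-qubit generalized GHZ state (with
`|a₁|² ≥ 1/2`, `|a₁|² + |a₂|² = 1`), the outcome probabilities are
`p¹ = |a₁|² cos²(θ/2) + |a₂|² sin²(θ/2)` and
`p² = |a₁|² sin²(θ/2) + |a₂|² cos²(θ/2)`, each post-measurement state is an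
`(N-1)`-qubit generalized GHZ state, and the average post-measurement GGM
equals `1 - max {|a₁|², cos²(θ/2), sin²(θ/2)}`. -/
theorem stmt4 (N : ℕ) (hN : 3 ≤ N) (a1 a2 : ℂ)
    (h : Complex.normSq a1 + Complex.normSq a2 = 1)
    (ha1 : 1 / 2 ≤ Complex.normSq a1) (θ φ : ℝ) :
    nsq (collapse (ghz a1 a2 : PureState (Fin N)) ⟨0, by omega⟩ (xiUp θ φ)) =
      Complex.normSq a1 * Real.cos (θ / 2) ^ 2 +
        Complex.normSq a2 * Real.sin (θ / 2) ^ 2 ∧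
    nsq (collapse (ghz a1 a2 : PureState (Fin N)) ⟨0, by omega⟩ (xiDn θ φ)) =
      Complex.normSq a1 * Real.sin (θ / 2) ^ 2 +
        Complex.normSq a2 * Real.cos (θ / 2) ^ 2 ∧
    collapse (ghz a1 a2 : PureState (Fin N)) ⟨0, by omega⟩ (xiUp θ φ) =
      ghz (a1 * (Real.cos (θ / 2) : ℂ))
        (a2 * Complex.exp (φ * Complex.I) * (Real.sin (θ / 2) : ℂ)) ∧
    collapse (ghz a1 a2 : PureState (Fin N)) ⟨0, by omega⟩ (xiDn θ φ) =
      ghz (-(a1 * Complex.exp (-(φ * Complex.I))) * (Real.sin (θ / 2) : ℂ))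
        (a2 * (Real.cos (θ / 2) : ℂ)) ∧
    avgGGM (ghz a1 a2 : PureState (Fin N)) ⟨0, by omega⟩ θ φ =
      1 - max (Complex.normSq a1)
        (max (Real.cos (θ / 2) ^ 2) (Real.sin (θ / 2) ^ 2)) := by
  have hcard : 2 ≤ Fintype.card {i : Fin N // i ≠ ⟨0, by omega⟩} := by
    rw [Fintype.card_subtype_compl, Fintype.card_fin, Fintype.card_unique]
    omega
  have : Nonempty {i : Fin N // i ≠ ⟨0, by omega⟩} := Fintype.card_pos_iff.mp (by omega)
  refine ⟨nsq_collapse_ghz_xiUp _ _ _ _ _, nsq_collapse_ghz_xiDn _ _ _ _ _,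
    collapse_ghz_xiUp _ _ _ _ _, collapse_ghz_xiDn _ _ _ _ _, ?_⟩
  rw [avgGGM_ghz _ hcard]
  exact min_add_min_eq_one_sub_max h (Real.cos_sq_add_sin_sq _) ha1

end QI
end
end

section
/- For the N-qubit Dicke state |D_k^N⟩ with N > 2 and 1 ≤ k ≤ N/2, the generalized geometric measure equals (N−2)/(2(N−1)) if k = N/2, and k/N if k < N/2. -/
open scoped BigOperators

noncomputable section

namespace QI

variable {ι : Type} [Fintype ι] [DecidableEq ι]

/-! The reduced state of `|D_k^N⟩` on a set `A` of `n` qubits is block diagonal in the weight of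
the configuration: the block of weight `i` is `C(N - n, k - i) / C(N, k)` times the all-ones matrix
on the `C(n, i)` configurations of weight `i`. By the Schur test its largest eigenvalue is
`max_i C(n, i) C(N - n, k - i) / C(N, k)`, so it remains to maximize `C(n, i) C(N - n, j)` over
`0 < n < N`, `i + j = k`. For `2k < N`, a Pascal step on a factor `C(m, j)` with `2j < m` (so that
`C(m, j) ≤ C(m, j + 1)`) fits the product into two terms of Vandermonde's sum for `C(N - 1, k)`,
which is attained at `n = 1`. For `2k = N`, one more Pascal step splits the product into two terms,
each bounded by `C(N - 2, k - 1)`, and `2 C(N - 2, k - 1)` is attained at `n = 2`. -/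

open Finset

section Combinatorics

theorem choose_le_choose_succ_of_two_mul_lt {m j : ℕ} (h : 2 * j < m) :
    m.choose j ≤ m.choose (j + 1) := by
  refine Nat.le_of_mul_le_mul_right ?_ j.succ_pos
  calc m.choose j * (j + 1) ≤ m.choose j * (m - j) := by gcongr; omega
    _ = m.choose (j + 1) * (j + 1) := (Nat.choose_succ_right_eq m j).symm

theorem choose_succ_mul_choose_le {n m i j : ℕ} (h : 2 * j < m) :
    (n + 1).choose (i + 1) * m.choose j ≤ (n + m).choose (i + j + 1) := by
  have hpair : ({(i, j + 1), (i + 1, j)} : Finset (ℕ × ℕ)) ⊆ antidiagonal (i + j + 1) := by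
    intro p hp
    simp only [mem_insert, mem_singleton] at hp
    rcases hp with rfl | rfl <;> simp <;> omega
  calc (n + 1).choose (i + 1) * m.choose j
      = n.choose i * m.choose j + n.choose (i + 1) * m.choose j := by
        rw [Nat.choose_succ_succ', add_mul]
    _ ≤ n.choose i * m.choose (j + 1) + n.choose (i + 1) * m.choose j := by
        gcongr; exact choose_le_choose_succ_of_two_mul_lt h
    _ = ∑ p ∈ {(i, j + 1), (i + 1, j)}, n.choose p.1 * m.choose p.2 := by
        rw [sum_pair (by simp)]
    _ ≤ ∑ p ∈ antidiagonal (i + j + 1), n.choose p.1 * m.choose p.2 :=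
        sum_le_sum_of_subset hpair
    _ = (n + m).choose (i + j + 1) := (Nat.add_choose_eq n m _).symm

theorem choose_mul_choose_le_of_two_mul_lt {n m i j : ℕ} (hn : 0 < n) (hm : 0 < m)
    (h : 2 * (i + j) < n + m) : n.choose i * m.choose j ≤ (n + m - 1).choose (i + j) := by
  rcases Nat.eq_zero_or_pos (i + j) with hij | hij
  · obtain ⟨rfl, rfl⟩ : i = 0 ∧ j = 0 := by omega
    simp
  by_cases hi : 0 < i ∧ 2 * j < m
  · obtain ⟨n, rfl⟩ : ∃ n', n = n' + 1 := ⟨n - 1, by omega⟩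
    obtain ⟨i, rfl⟩ : ∃ i', i = i' + 1 := ⟨i - 1, by omega⟩
    convert choose_succ_mul_choose_le (n := n) (i := i) hi.2 using 2 <;> omega
  · obtain ⟨m, rfl⟩ : ∃ m', m = m' + 1 := ⟨m - 1, by omega⟩
    obtain ⟨j, rfl⟩ : ∃ j', j = j' + 1 := ⟨j - 1, by omega⟩
    rw [mul_comm]
    convert choose_succ_mul_choose_le (n := m) (i := j) (m := n) (j := i) (by omega) using 2 <;>
      omega

/-- Complementing, `C(n, i) = C(n, n - i)`, reduces this to `choose_mul_choose_le_of_two_mul_lt`. -/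
theorem choose_mul_choose_le_of_lt_two_mul {n m i j : ℕ} (hn : 0 < n) (hm : 0 < m)
    (h : n + m < 2 * (i + j)) : n.choose i * m.choose j ≤ (n + m - 1).choose (i + j - 1) := by
  rcases Nat.lt_or_ge n i with hi | hi
  · simp [Nat.choose_eq_zero_of_lt hi]
  rcases Nat.lt_or_ge m j with hj | hj
  · simp [Nat.choose_eq_zero_of_lt hj]
  rw [← Nat.choose_symm hi, ← Nat.choose_symm hj,
    Nat.choose_symm_of_eq_add (show n + m - 1 = i + j - 1 + (n - i + (m - j)) by omega)]
  exact choose_mul_choose_le_of_two_mul_lt hn hm (by omega)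

theorem choose_mul_choose_le_two_mul_centralBinom {n m i j t : ℕ} (ht : 0 < t) (hn : 0 < n)
    (hm : 0 < m) (hnm : n + m = 2 * (t + 1)) (hij : i + j = t + 1) :
    n.choose i * m.choose j ≤ 2 * t.centralBinom := by
  wlog hle : n ≤ m generalizing n m i j
  · rw [mul_comm]; exact this hm hn (by omega) (by omega) (by omega)
  rw [Nat.centralBinom_eq_two_mul_choose]
  obtain ⟨m, rfl⟩ : ∃ m', m = m' + 1 := ⟨m - 1, by omega⟩
  rcases j with _ | j
  · have : n.choose i ≤ 1 := by
      rcases (show n ≤ i by omega).lt_or_eq with h | rfl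
      · simp [Nat.choose_eq_zero_of_lt h]
      · simp
    have := Nat.choose_pos (show t ≤ 2 * t by omega)
    simp only [Nat.choose_zero_right, mul_one]
    omega
  calc n.choose i * (m + 1).choose (j + 1)
      = n.choose i * m.choose j + n.choose i * m.choose (j + 1) := by
        rw [Nat.choose_succ_succ', mul_add]
    _ ≤ (2 * t).choose t + (2 * t).choose t := by
        apply add_le_add
        · refine (choose_mul_choose_le_of_two_mul_lt hn (i := i) (j := j) (by omega)
            (by omega)).trans_eq ?_
          congr 1 <;> omega
        · refine (choose_mul_choose_le_of_lt_two_mul hn (i := i) (j := j + 1) (by omega)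
            (by omega)).trans_eq ?_
          congr 1 <;> omega
    _ = 2 * (2 * t).choose t := (two_mul _).symm

/-- For `m ∈ dickeCutSpectrum N k`, `m / C(N, k)` is an eigenvalue of the reduced state of
`|D_k^N⟩` on `n` qubits, `0 < n < N`. -/
def dickeCutSpectrum (N k : ℕ) : Set ℕ :=
  {m | ∃ n i j, 0 < n ∧ n < N ∧ i ≤ n ∧ i + j = k ∧ m = n.choose i * (N - n).choose j}

theorem isGreatest_dickeCutSpectrum_of_two_mul_lt {n k : ℕ} (hn : 0 < n) (h : 2 * k < n + 1) :
    IsGreatest (dickeCutSpectrum (n + 1) k) (n.choose k) := by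
  refine ⟨⟨1, 0, k, one_pos, by omega, Nat.zero_le 1, zero_add k, by simp⟩, ?_⟩
  rintro _ ⟨m, i, j, hm, hmn, -, rfl, rfl⟩
  refine (choose_mul_choose_le_of_two_mul_lt hm (by omega) (by omega)).trans_eq ?_
  congr 1; omega

theorem isGreatest_dickeCutSpectrum_two_mul {t : ℕ} (ht : 0 < t) :
    IsGreatest (dickeCutSpectrum (2 * (t + 1)) (t + 1)) (2 * t.centralBinom) := by
  refine ⟨⟨2, 1, t, two_pos, by omega, one_le_two, add_comm 1 t, ?_⟩, ?_⟩
  · rw [Nat.centralBinom_eq_two_mul_choose, Nat.choose_one_right]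
    congr 2
  rintro _ ⟨m, i, j, hm, hmN, -, hij, rfl⟩
  exact choose_mul_choose_le_two_mul_centralBinom ht hm (by omega) (by omega) hij

theorem one_sub_choose_div_choose_succ {n k : ℕ} (hk : k ≤ n + 1) :
    1 - (n.choose k : ℝ) / (n + 1).choose k = k / (n + 1) := by
  have hpos : (0 : ℝ) < (n + 1).choose k := by exact_mod_cast Nat.choose_pos hk
  have key : (n.choose k : ℝ) * (n + 1) = (n + 1).choose k * (n + 1 - k) := by
    exact_mod_cast Nat.choose_mul_succ_eq n k
  field_simp
  linarith

theorem one_sub_two_mul_centralBinom_div (t : ℕ) :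
    1 - 2 * (t.centralBinom : ℝ) / (t + 1).centralBinom = t / (2 * t + 1) := by
  have hpos : (0 : ℝ) < (t + 1).centralBinom := by exact_mod_cast Nat.centralBinom_pos _
  have key : ((t + 1 : ℕ) : ℝ) * (t + 1).centralBinom = 2 * (2 * t + 1) * t.centralBinom := by
    exact_mod_cast Nat.succ_mul_centralBinom_succ t
  push_cast at key
  field_simp
  linarith

end Combinatorics

section Rayleigh

variable {κ : Type} [Fintype κ]

def rayleigh (ρ : κ → κ → ℂ) (v : κ → ℂ) : ℝ := (∑ i, ∑ j, star (v i) * ρ i j * v j).re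

theorem maxEig_eq_of_isGreatest {ρ : κ → κ → ℂ} {M : ℝ}
    (h : IsGreatest (Set.range fun v : {v : κ → ℂ // ∑ i, Complex.normSq (v i) = 1} =>
      rayleigh ρ v.1) M) : maxEig ρ = M :=
  h.csSup_eq

theorem rayleigh_ofReal (r : κ → κ → ℝ) (w : κ → ℝ) :
    rayleigh (fun x y => (r x y : ℂ)) (fun x => (w x : ℂ)) = ∑ x, ∑ y, w x * r x y * w y := by
  simp [rayleigh, Complex.re_sum, ← Complex.ofReal_mul]

theorem re_star_mul_le (a b : ℂ) : (star a * b).re ≤ (Complex.normSq a + Complex.normSq b) / 2 := by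
  simp only [Complex.star_def, Complex.mul_re, Complex.conj_re, Complex.conj_im,
    Complex.normSq_apply]
  nlinarith [sq_nonneg (a.re - b.re), sq_nonneg (a.im - b.im)]

/-- Schur test: for a nonnegative symmetric matrix, the Rayleigh quotient is bounded by the
largest row sum, since `Re (conj a * b) ≤ (|a|² + |b|²) / 2`. -/
theorem rayleigh_le_of_rowSum_le {r : κ → κ → ℝ} {M : ℝ} (hr : ∀ x y, 0 ≤ r x y)
    (hsymm : ∀ x y, r x y = r y x) (hrow : ∀ x, ∑ y, r x y ≤ M) {v : κ → ℂ}
    (hv : ∑ x, Complex.normSq (v x) = 1) : rayleigh (fun x y => (r x y : ℂ)) v ≤ M := by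
  set n := fun x => Complex.normSq (v x)
  have hswap : ∑ x, ∑ y, r x y * n y = ∑ x, ∑ y, r x y * n x := by
    rw [sum_comm]
    exact sum_congr rfl fun x _ => sum_congr rfl fun y _ => by rw [hsymm]
  calc rayleigh (fun x y => (r x y : ℂ)) v
      = ∑ x, ∑ y, r x y * (star (v x) * v y).re := by
        simp only [rayleigh, Complex.re_sum]
        refine sum_congr rfl fun x _ => sum_congr rfl fun y _ => ?_
        rw [mul_comm (star (v x)), mul_assoc, Complex.re_ofReal_mul]
    _ ≤ ∑ x, ∑ y, r x y * ((n x + n y) / 2) := by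
        gcongr with x _ y _
        · exact hr x y
        · exact re_star_mul_le _ _
    _ = ∑ x, (∑ y, r x y) * n x := by
        simp only [mul_div_assoc', mul_add, add_div, sum_add_distrib, ← sum_div,
          hswap, sum_mul]
        ring
    _ ≤ ∑ x, M * n x := by
        gcongr with x
        · exact Complex.normSq_nonneg _
        · exact hrow x
    _ = M := by rw [← mul_sum, hv, mul_one]

end Rayleigh

section BlockConst

variable {κ β : Type} [Fintype κ] [DecidableEq β]

def blockConst (f : κ → β) (c : β → ℝ) (x y : κ) : ℝ := if f x = f y then c (f x) else 0

theorem sum_blockConst (f : κ → β) (c : β → ℝ) (x : κ) :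
    ∑ y, blockConst f c x y = c (f x) * #{y | f y = f x} := by
  simp [blockConst, sum_ite, eq_comm, mul_comm]

theorem exists_rayleigh_blockConst_eq (f : κ → β) (c : β → ℝ) (x₀ : κ) :
    ∃ v : κ → ℂ, ∑ x, Complex.normSq (v x) = 1 ∧
      rayleigh (fun x y => (blockConst f c x y : ℂ)) v = c (f x₀) * #{y | f y = f x₀} := by
  set F : Finset κ := {y | f y = f x₀}
  have hF : (0 : ℝ) < #F := by exact_mod_cast card_pos.mpr ⟨x₀, by simp [F]⟩
  set s := (√(#F : ℝ))⁻¹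
  have hs : s * s * #F = 1 := by
    rw [← sq, inv_pow, Real.sq_sqrt hF.le, inv_mul_cancel₀ hF.ne']
  set w : κ → ℝ := fun x => if f x = f x₀ then s else 0
  refine ⟨fun x => (w x : ℂ), ?_, ?_⟩
  · have hw : ∀ x, w x * w x = if f x = f x₀ then s * s else 0 := by
      intro x; simp only [w]; split_ifs <;> ring
    simp only [Complex.normSq_ofReal, hw]
    rw [← sum_filter, sum_const, nsmul_eq_mul, ← hs, mul_comm]
  · have hw : ∀ x y, w x * blockConst f c x y * w y =
        if f x = f x₀ then (if f y = f x₀ then s * c (f x₀) * s else 0) else 0 := by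
      intro x y; simp only [w, blockConst]; split_ifs <;> simp_all
    have hrow : ∀ x, ∑ y, w x * blockConst f c x y * w y =
        if f x = f x₀ then #F * (s * c (f x₀) * s) else 0 := by
      intro x
      simp only [hw]
      split_ifs
      · rw [← sum_filter, sum_const, nsmul_eq_mul]
      · simp
    rw [rayleigh_ofReal, sum_congr rfl fun x _ => hrow x, ← sum_filter,
      sum_const, nsmul_eq_mul]
    linear_combination (c (f x₀) * #F) * hs

theorem maxEig_blockConst [Nonempty κ] (f : κ → β) {c : β → ℝ} (hc : ∀ b, 0 ≤ c b) :
    maxEig (fun x y => (blockConst f c x y : ℂ)) =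
      univ.sup' univ_nonempty fun x => c (f x) * #{y | f y = f x} := by
  obtain ⟨x₀, -, hx₀⟩ := exists_mem_eq_sup' univ_nonempty fun x => c (f x) * #{y | f y = f x}
  apply maxEig_eq_of_isGreatest
  refine ⟨?_, ?_⟩
  · obtain ⟨v, hv, hval⟩ := exists_rayleigh_blockConst_eq f c x₀
    exact ⟨⟨v, hv⟩, hval.trans hx₀.symm⟩
  · rintro _ ⟨v, rfl⟩
    refine rayleigh_le_of_rowSum_le (fun x y => ?_) (fun x y => ?_) (fun x => ?_) v.2
    · unfold blockConst; split_ifs <;> simp [hc]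
    · unfold blockConst; split_ifs <;> simp_all
    · rw [sum_blockConst]
      exact le_sup' (fun x => c (f x) * #{y | f y = f x}) (mem_univ x)

end BlockConst

section Weight

variable {κ : Type} [Fintype κ]

def weight (x : κ → Fin 2) : ℕ := ∑ i, (x i : ℕ)

theorem weight_eq_card (x : κ → Fin 2) : weight x = #{i | x i = 1} := by
  rw [weight, card_filter]
  refine sum_congr rfl fun i _ => ?_
  generalize x i = a
  fin_cases a <;> rfl

theorem weight_le_card (x : κ → Fin 2) : weight x ≤ Fintype.card κ :=
  (weight_eq_card x).trans_le (card_filter_le univ _)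

theorem card_filter_weight_eq [DecidableEq κ] (m : ℕ) :
    #{x : κ → Fin 2 | weight x = m} = (Fintype.card κ).choose m := by
  rw [← card_univ, ← card_powersetCard]
  refine card_nbij' (fun x => ({i | x i = 1} : Finset κ)) (fun s i => if i ∈ s then 1 else 0)
    ?_ ?_ ?_ ?_
  · intro x hx
    simp_all [weight_eq_card]
  · intro s hs
    simp_all [weight_eq_card]
  · intro x _
    funext i
    by_cases h : x i = 1 <;> simp [h]
    omega
  · intro s _
    ext i
    simp

theorem card_filter_add_weight_eq [DecidableEq κ] {i j k : ℕ}
    (h : i + j = k) : #{x : κ → Fin 2 | i + weight x = k} = (Fintype.card κ).choose j := by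
  rw [← card_filter_weight_eq]
  congr 1
  exact filter_congr fun x _ => by omega

end Weight

section Dicke

theorem weight_merge (A : Finset ι) (a : {i // i ∈ A} → Fin 2) (b : {i // i ∉ A} → Fin 2) :
    weight (merge A a b) = weight a + weight b := by
  rw [weight, ← sum_add_sum_compl A, sum_subtype A (fun _ => Iff.rfl),
    sum_subtype Aᶜ (fun _ => mem_compl)]
  congr 1 <;> refine sum_congr rfl fun x _ => ?_ <;> simp [merge, x.2]

omit [DecidableEq ι] in
theorem dicke_apply (k : ℕ) (x : ι → Fin 2) :
    dicke k x = if weight x = k then ((1 / √((Fintype.card ι).choose k : ℝ) : ℝ) : ℂ) else 0 :=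
  rfl

theorem rdm_dicke (k : ℕ) (A : Finset ι) :
    rdm (dicke k) A = fun a a' => (blockConst weight
      (fun i => (#{b : {j // j ∉ A} → Fin 2 | i + weight b = k} : ℝ) / (Fintype.card ι).choose k)
      a a' : ℂ) := by
  have hr : (√((Fintype.card ι).choose k : ℝ))⁻¹ * (√((Fintype.card ι).choose k : ℝ))⁻¹ =
      ((Fintype.card ι).choose k : ℝ)⁻¹ := by
    rw [← mul_inv, Real.mul_self_sqrt (Nat.cast_nonneg _)]
  have hterm : ∀ (a a' : {i // i ∈ A} → Fin 2) b,
      dicke k (merge A a b) * star (dicke k (merge A a' b)) =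
        if weight a + weight b = k ∧ weight a' + weight b = k
        then ((1 / (Fintype.card ι).choose k : ℝ) : ℂ) else 0 := by
    intro a a' b
    rw [dicke_apply, dicke_apply, weight_merge, weight_merge]
    split_ifs <;> simp_all
    simpa using congrArg Complex.ofReal hr
  funext a a'
  simp only [rdm, blockConst, hterm]
  split_ifs with h
  · simp only [← h, and_self, ← sum_filter, sum_const, nsmul_eq_mul]
    push_cast
    ring
  · refine sum_eq_zero fun b _ => if_neg fun h' => h (by omega)

theorem maxEig_rdm_dicke (k : ℕ) (A : Finset ι) :
    maxEig (rdm (dicke k) A) = univ.sup' univ_nonempty fun a : {i // i ∈ A} → Fin 2 =>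
      (#{b : {j // j ∉ A} → Fin 2 | weight a + weight b = k} : ℝ) / (Fintype.card ι).choose k *
        #{a' : {i // i ∈ A} → Fin 2 | weight a' = weight a} := by
  rw [rdm_dicke, maxEig_blockConst _ fun i => by positivity]

theorem card_mul_card_filter_weight (A : Finset ι) {k j : ℕ} (a : {i // i ∈ A} → Fin 2)
    (h : weight a + j = k) :
    #{a' : {i // i ∈ A} → Fin 2 | weight a' = weight a} *
        #{b : {j // j ∉ A} → Fin 2 | weight a + weight b = k} =
      (#A).choose (weight a) * (Fintype.card ι - #A).choose j := by
  rw [card_filter_add_weight_eq h, card_filter_weight_eq, Fintype.card_subtype_compl,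
    Fintype.card_coe]

theorem maxEig_rdm_dicke_le {A : Finset ι} (hA : A.Nonempty) (hA' : A ≠ univ) {k M : ℕ}
    (hM : M ∈ upperBounds (dickeCutSpectrum (Fintype.card ι) k)) :
    maxEig (rdm (dicke k) A) ≤ M / (Fintype.card ι).choose k := by
  rw [maxEig_rdm_dicke]
  refine sup'_le _ _ fun a _ => ?_
  rcases le_or_gt (weight a) k with h | h
  · obtain ⟨j, hj⟩ := Nat.exists_eq_add_of_le h
    have hcut := hM ⟨#A, weight a, j, card_pos.2 hA, card_lt_card (ssubset_univ_iff.2 hA'),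
      (weight_le_card a).trans_eq (Fintype.card_coe A), hj.symm, rfl⟩
    rw [div_mul_eq_mul_div, mul_comm, ← Nat.cast_mul, card_mul_card_filter_weight A a hj.symm]
    gcongr
  · rw [filter_false_of_mem fun b _ => by omega]
    simp only [card_empty, Nat.cast_zero, zero_div, zero_mul]
    positivity

theorem le_maxEig_rdm_dicke (A : Finset ι) {i j k : ℕ} (hi : i ≤ #A) (hij : i + j = k) :
    ((#A).choose i * (Fintype.card ι - #A).choose j : ℕ) / ((Fintype.card ι).choose k : ℝ) ≤
      maxEig (rdm (dicke k) A) := by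
  obtain ⟨a, ha⟩ : ∃ a : {i // i ∈ A} → Fin 2, weight a = i := by
    have : 0 < #{a : {i // i ∈ A} → Fin 2 | weight a = i} := by
      rw [card_filter_weight_eq, Fintype.card_coe]; exact Nat.choose_pos hi
    obtain ⟨a, ha⟩ := card_pos.1 this
    exact ⟨a, (mem_filter.1 ha).2⟩
  subst ha
  rw [maxEig_rdm_dicke, ← card_mul_card_filter_weight A a hij, Nat.cast_mul, mul_comm,
    ← div_mul_eq_mul_div]
  exact le_sup'_of_le _ (mem_univ a) le_rfl

theorem GGM_dicke_of_isGreatest {k M : ℕ}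
    (hM : IsGreatest (dickeCutSpectrum (Fintype.card ι) k) M) :
    GGM (dicke k : PureState ι) = 1 - M / (Fintype.card ι).choose k := by
  rw [GGM]
  congr 1
  refine IsGreatest.csSup_eq ⟨?_, ?_⟩
  · obtain ⟨n, i, j, hn, hnN, hin, hij, rfl⟩ := hM.1
    obtain ⟨A, -, rfl⟩ := exists_subset_card_eq (hnN.le.trans_eq (card_univ (α := ι)).symm)
    have hA : A ≠ univ := fun h => by simp [h] at hnN
    exact ⟨⟨A, card_pos.1 hn, hA⟩,
      le_antisymm (maxEig_rdm_dicke_le (card_pos.1 hn) hA hM.2) (le_maxEig_rdm_dicke A hin hij)⟩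
  · rintro _ ⟨A, rfl⟩
    exact maxEig_rdm_dicke_le A.2.1 A.2.2 hM.2

end Dicke

theorem stmt12_general (N k : ℕ) (hN : 2 < N) (hk2 : 2 * k ≤ N) :
    GGM (dicke k : PureState (Fin N)) =
      if 2 * k = N then ((N : ℝ) - 2) / (2 * ((N : ℝ) - 1))
      else (k : ℝ) / N := by
  rcases hk2.lt_or_eq with hlt | rfl
  · obtain ⟨n, rfl⟩ : ∃ n, N = n + 1 := ⟨N - 1, by omega⟩
    rw [if_neg hlt.ne, GGM_dicke_of_isGreatest (M := n.choose k), Fintype.card_fin,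
      one_sub_choose_div_choose_succ (by omega)]
    · push_cast; rfl
    · rw [Fintype.card_fin]
      exact isGreatest_dickeCutSpectrum_of_two_mul_lt (by omega) hlt
  · obtain ⟨t, rfl⟩ : ∃ t, k = t + 1 := ⟨k - 1, by omega⟩
    rw [if_pos rfl, GGM_dicke_of_isGreatest (M := 2 * t.centralBinom), Fintype.card_fin,
      ← Nat.centralBinom_eq_two_mul_choose, Nat.cast_mul, Nat.cast_ofNat,
      one_sub_two_mul_centralBinom_div]
    · push_cast
      rw [div_eq_div_iff (by positivity) (by linarith)]
      ring
    · rw [Fintype.card_fin]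
      exact isGreatest_dickeCutSpectrum_two_mul (by omega)

/-- For the `N`-qubit Dicke state `|D_k^N⟩` with `N > 2` and
`1 ≤ k ≤ N/2`, the GGM equals `(N-2)/(2(N-1))` if `k = N/2` and `k/N`
if `k < N/2`. -/
theorem stmt12 (N k : ℕ) (hN : 2 < N) (hk1 : 1 ≤ k) (hk2 : 2 * k ≤ N) :
    GGM (dicke k : PureState (Fin N)) =
      if 2 * k = N then ((N : ℝ) - 2) / (2 * ((N : ℝ) - 1))
      else (k : ℝ) / N :=
  stmt12_general N k hN hk2

end QI
end
end
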